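/- Let (W, b, ρ) be a radial neural network with L layers and widths vector n = (n₀, …, n_L), and let g = (Q₁, …, Q_{L−1}) ∈ O(n₁) × ⋯ × O(n_{L−1}). Then the radial neural network with transformed parameters g·(W, b) = ((Q_i W_i Q_{i−1}^{−1})_{i=1}^L, (Q_i b_i)_{i=1}^L) (where Q₀ = id and Q_L = id) and the same activations ρ has the same feedforward function as (W, b, ρ). -/

import Mathlib

open scoped Classical
open Metric Set

noncomputable section

abbrev Euc (n : ℕ) := EuclideanSpace ℝ (Fin n)

def mulVecE {m n : ℕ} (W : Matrix (Fin m) (Fin n) ℝ) (v : Euc n) : Euc m :=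
  WithLp.toLp 2 (fun j => ∑ k, W j k * v k)

/-- The radial rescaling function h⁽ᵏ⁾ : ℝᵏ → ℝᵏ associated to h : ℝ → ℝ,
v ↦ (h ‖v‖ / ‖v‖) • v for v ≠ 0, and 0 ↦ 0. -/
def radialRescale {n : ℕ} (h : ℝ → ℝ) (v : Euc n) : Euc n :=
  if v = 0 then 0 else (h ‖v‖ / ‖v‖) • v

/-- The partial feedforward functions of a fully connected network with widths
width 0, width 1, …: F₀ = id and F_{i+1}(x) = ρᵢ(Wᵢ Fᵢ(x) + bᵢ).
(Activation ρ i, weights W i and biases b i belong to layer i+1.) -/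
def feedforward (width : ℕ → ℕ)
    (W : ∀ i : ℕ, Matrix (Fin (width (i+1))) (Fin (width i)) ℝ)
    (b : ∀ i : ℕ, Euc (width (i+1)))
    (ρ : ∀ i : ℕ, Euc (width (i+1)) → Euc (width (i+1))) :
    (i : ℕ) → Euc (width 0) → Euc (width i)
  | 0 => fun x => x
  | (i+1) => fun x => ρ i (mulVecE (W i) (feedforward width W b ρ i x) + b i)


/-! Orthogonal matrices preserve norms, so they commute with every radial rescaling. Hence, by
induction on the layer, the `i`-th partial feedforward function of the transformed network is
`Qᵢ` applied to that of the original one; at the output layer `Q_L = 1`. -/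

lemma mulVecE_eq_toLpLin {m n : ℕ} (W : Matrix (Fin m) (Fin n) ℝ) (v : Euc n) :
    mulVecE W v = Matrix.toLpLin 2 2 W v := rfl

lemma mulVecE_one {n : ℕ} (v : Euc n) : mulVecE (1 : Matrix (Fin n) (Fin n) ℝ) v = v := by
  rw [mulVecE_eq_toLpLin, Matrix.toLpLin_one, LinearMap.id_apply]

lemma mulVecE_mulVecE {m n p : ℕ} (A : Matrix (Fin m) (Fin n) ℝ)
    (B : Matrix (Fin n) (Fin p) ℝ) (v : Euc p) :
    mulVecE A (mulVecE B v) = mulVecE (A * B) v := by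
  simp only [mulVecE_eq_toLpLin, Matrix.toLpLin_mul 2 2 2, LinearMap.comp_apply]

lemma mulVecE_add {m n : ℕ} (W : Matrix (Fin m) (Fin n) ℝ) (u v : Euc n) :
    mulVecE W (u + v) = mulVecE W u + mulVecE W v := by
  simp only [mulVecE_eq_toLpLin, map_add]

lemma radialRescale_map_linearIsometry {m n : ℕ} (f : Euc n →ₗᵢ[ℝ] Euc m)
    (h : ℝ → ℝ) (v : Euc n) : radialRescale h (f v) = f (radialRescale h v) := by
  by_cases hv : v = 0
  · simp [radialRescale, hv]
  · have hfv : f v ≠ 0 := by rwa [← norm_ne_zero_iff, f.norm_map, norm_ne_zero_iff]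
    simp only [radialRescale, hv, hfv, if_false, f.norm_map, map_smul]

lemma radialRescale_mulVecE_of_mem_orthogonalGroup {n : ℕ} {Q : Matrix (Fin n) (Fin n) ℝ}
    (hQ : Q ∈ Matrix.orthogonalGroup (Fin n) ℝ) (h : ℝ → ℝ) (v : Euc n) :
    radialRescale h (mulVecE Q v) = mulVecE Q (radialRescale h v) :=
  -- `mulVecE Q` is definitionally the isometry given by the unitary operator `toEuclideanCLM Q`.
  radialRescale_map_linearIsometry
    (Unitary.linearIsometryEquiv
      ⟨Matrix.toEuclideanCLM (𝕜 := ℝ) Q, Unitary.map_mem _ hQ⟩).toLinearIsometry h v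

theorem feedforward_conj_mulVecE (width : ℕ → ℕ)
    (W : ∀ i : ℕ, Matrix (Fin (width (i+1))) (Fin (width i)) ℝ)
    (b : ∀ i : ℕ, Euc (width (i+1)))
    (ρ : ∀ i : ℕ, Euc (width (i+1)) → Euc (width (i+1)))
    (Q : ∀ i : ℕ, Matrix (Fin (width i)) (Fin (width i)) ℝ) (hQ : ∀ i, IsUnit (Q i))
    (hρ : ∀ i v, ρ i (mulVecE (Q (i+1)) v) = mulVecE (Q (i+1)) (ρ i v))
    (i : ℕ) (x : Euc (width 0)) :
    feedforward width (fun i => Q (i+1) * W i * (Q i)⁻¹) (fun i => mulVecE (Q (i+1)) (b i)) ρ i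
        (mulVecE (Q 0) x)
      = mulVecE (Q i) (feedforward width W b ρ i x) := by
  induction i with
  | zero => rfl
  | succ i ih =>
    have hinv : (Q i)⁻¹ * Q i = 1 :=
      Matrix.nonsing_inv_mul _ ((Matrix.isUnit_iff_isUnit_det _).mp (hQ i))
    simp only [feedforward]
    rw [ih, ← hρ, mulVecE_mulVecE, Matrix.mul_assoc, hinv, Matrix.mul_one, ← mulVecE_mulVecE,
      mulVecE_add]

/-- Let (W, b, ρ) be a radial neural network with L layers and widths
n₀, …, n_L, with activations ρᵢ = hᵢ^{(nᵢ)}, and let Q = (Q₀, …, Q_L) be orthogonal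
matrices with Q₀ = 1 and Q_L = 1.  Then the network with transformed parameters
Wᵢ ↦ Qᵢ Wᵢ Qᵢ₋₁⁻¹, bᵢ ↦ Qᵢ bᵢ and the same activations has the same feedforward
function. -/
theorem feedforward_orthogonal_invariance (L : ℕ) (width : ℕ → ℕ)
    (W : ∀ i : ℕ, Matrix (Fin (width (i+1))) (Fin (width i)) ℝ)
    (b : ∀ i : ℕ, Euc (width (i+1)))
    (h : ℕ → ℝ → ℝ)
    (Q : ∀ i : ℕ, Matrix (Fin (width i)) (Fin (width i)) ℝ)
    (hQ : ∀ i, Q i ∈ Matrix.orthogonalGroup (Fin (width i)) ℝ)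
    (hQ0 : Q 0 = 1) (hQL : Q L = 1) (x : Euc (width 0)) :
    feedforward width (fun i => Q (i+1) * W i * (Q i)⁻¹)
        (fun i => mulVecE (Q (i+1)) (b i))
        (fun i => radialRescale (h i)) L x
      = feedforward width W b (fun i => radialRescale (h i)) L x := by
  have equivariant := feedforward_conj_mulVecE width W b (fun i => radialRescale (h i)) Q
    (fun i => Unitary.isUnit_coe (U := ⟨Q i, hQ i⟩))
    (fun i => radialRescale_mulVecE_of_mem_orthogonalGroup (hQ (i+1)) (h i)) L x
  rwa [hQ0, hQL, mulVecE_one, mulVecE_one] at equivariant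

end
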